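/- arXiv:1107.2188 — 3 statements merged into one kernel-verified Lean document; each statement's English description precedes it below -/
import Mathlib

section
/- E[w(M)] = (p/(1-p))·E[w(N)]. Precisely: the Lebesgue integral of w(M) with respect to ℙ equals ENNReal.ofReal (p/(1-p)) times the Lebesgue integral of w(N) with respect to ℙ. -/
open MeasureTheory ENNReal
open scoped Classical

noncomputable section

/-- The number of indices `t < n` with `ω t = true`. -/
def countTrue (ω : ℕ → Bool) (n : ℕ) : ℕ :=
  ((Finset.range n).filter fun t => ω t = true).card

/-- The least `T : ℕ` such that exactly `μ` of `ω 0, …, ω (T-1)` are `true`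
(`∞` if no such `T` exists). -/
def tau (μ : ℕ) (ω : ℕ → Bool) : ℕ∞ :=
  sInf {T : ℕ∞ | ∃ n : ℕ, T = (n : ℕ∞) ∧ countTrue ω n = μ}

/-- `w(M)(ω) = Σ_{t < τ(ω), ω t = true} w t ω`. -/
def wOfM (μ : ℕ) (w : ℕ → (ℕ → Bool) → ℝ≥0∞) (ω : ℕ → Bool) : ℝ≥0∞ :=
  ∑' t : ℕ, if (t : ℕ∞) < tau μ ω ∧ ω t = true then w t ω else 0

/-- `w(N)(ω) = Σ_{t < τ(ω), ω t = false} w t ω`. -/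
def wOfN (μ : ℕ) (w : ℕ → (ℕ → Bool) → ℝ≥0∞) (ω : ℕ → Bool) : ℝ≥0∞ :=
  ∑' t : ℕ, if (t : ℕ∞) < tau μ ω ∧ ω t = false then w t ω else 0

/-- `P` is the law of an i.i.d. sequence of coin flips with head (`true`) probability `p`:
every finite cylinder set has the product Bernoulli probability. -/
def IsBernoulliProduct (p : ℝ) (P : Measure (ℕ → Bool)) : Prop :=
  ∀ (s : Finset ℕ) (b : ℕ → Bool),
    P {ω | ∀ i ∈ s, ω i = b i} =
      ∏ i ∈ s, (if b i then ENNReal.ofReal p else ENNReal.ofReal (1 - p))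

/-!
Stop the weights at `τ`: `f t ω = w t ω · 1{t < τ ω}`. Since `{t < τ}` is decided by the first `t`
flips, `f t` depends only on `ω 0, …, ω (t-1)`, and is therefore independent of the coin `ω t`
(read off from the cylinder probabilities: restricting `P` to `{ω t = c}` scales the law of any
finite block of other coordinates by `P(ω t = c)`).
Hence `E[1{ω t = true} f t] = p E[f t]` and `E[1{ω t = false} f t] = (1 - p) E[f t]`; summing
over `t` gives `E[w(M)] = p Σ E[f t]` and `E[w(N)] = (1 - p) Σ E[f t]`.
-/

open Set

lemma DependsOn.measurable {ι α β : Type*} [MeasurableSpace α] [Countable α]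
    [MeasurableSingletonClass α] [MeasurableSpace β] [Nonempty β] {f : (ι → α) → β} {s : Set ι}
    (hs : s.Finite) (hf : DependsOn f s) : Measurable f := by
  obtain ⟨g, rfl⟩ := dependsOn_iff_exists_comp.mp hf
  have := hs.to_subtype
  exact (measurable_of_countable g).comp (Set.measurable_restrict s)

def coinProb (p : ℝ) (c : Bool) : ℝ≥0∞ :=
  if c then ENNReal.ofReal p else ENNReal.ofReal (1 - p)

namespace IsBernoulliProduct

variable {p : ℝ} {P : Measure (ℕ → Bool)}

lemma measure_cylinder_inter_coord_eq_mul (hP : IsBernoulliProduct p P) {s : Finset ℕ} {t : ℕ}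
    (ht : t ∉ s) (b : ℕ → Bool) (c : Bool) :
    P ({ω | ∀ i ∈ s, ω i = b i} ∩ {ω | ω t = c}) = P {ω | ∀ i ∈ s, ω i = b i} * coinProb p c := by
  have hne : ∀ i ∈ s, i ≠ t := fun i hi => ne_of_mem_of_not_mem hi ht
  have hcyl : {ω : ℕ → Bool | ∀ i ∈ s, ω i = b i} ∩ {ω | ω t = c} =
      {ω | ∀ i ∈ insert t s, ω i = Function.update b t c i} := by
    ext ω
    simp +contextual [Function.update_of_ne, hne, and_comm]
  rw [hcyl, hP, hP, Finset.prod_insert ht, Function.update_self, mul_comm]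
  congr 1
  exact Finset.prod_congr rfl fun i hi => by rw [Function.update_of_ne (hne i hi)]

lemma map_restrict_restrict_coord_eq_smul (hP : IsBernoulliProduct p P) {s : Finset ℕ} {t : ℕ}
    (ht : t ∉ s) (c : Bool) :
    (P.restrict {ω | ω t = c}).map s.restrict = coinProb p c • P.map s.restrict := by
  refine Measure.ext_of_singleton fun v => ?_
  have hfiber : Finset.restrict (π := fun _ => Bool) s ⁻¹' {v} =
      {ω : ℕ → Bool | ∀ i ∈ s, ω i = if h : i ∈ s then v ⟨i, h⟩ else false} := by
    ext ω
    simp +contextual [funext_iff]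
  have hc : MeasurableSet {ω : ℕ → Bool | ω t = c} :=
    measurableSet_eq_fun (measurable_pi_apply t) measurable_const
  have hv := measurableSet_singleton v
  rw [Measure.smul_apply, Measure.map_apply (Finset.measurable_restrict s) hv,
    Measure.map_apply (Finset.measurable_restrict s) hv, Measure.restrict_apply' hc, hfiber,
    hP.measure_cylinder_inter_coord_eq_mul ht, smul_eq_mul, mul_comm]

lemma setLIntegral_coord_eq_mul (hP : IsBernoulliProduct p P) {s : Finset ℕ} {t : ℕ} (ht : t ∉ s)
    (c : Bool) {g : (ℕ → Bool) → ℝ≥0∞} (hg : DependsOn g s) :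
    ∫⁻ ω in {ω | ω t = c}, g ω ∂P = coinProb p c * ∫⁻ ω, g ω ∂P := by
  obtain ⟨G, rfl⟩ := dependsOn_iff_exists_comp.mp hg
  change ∫⁻ ω in _, G (s.restrict ω) ∂P = _ * ∫⁻ ω, G (s.restrict ω) ∂P
  have hG : Measurable G := measurable_of_finite G
  rw [← lintegral_map (g := s.restrict) hG (Finset.measurable_restrict s),
    ← lintegral_map (g := s.restrict) hG (Finset.measurable_restrict s),
    hP.map_restrict_restrict_coord_eq_smul ht, lintegral_smul_measure, smul_eq_mul]

lemma lintegral_tsum_ite_coord_eq_mul (hP : IsBernoulliProduct p P) (c : Bool)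
    {f : ℕ → (ℕ → Bool) → ℝ≥0∞} (hf : ∀ t, DependsOn (f t) (Iio t)) :
    ∫⁻ ω, ∑' t, (if ω t = c then f t ω else 0) ∂P = coinProb p c * ∑' t, ∫⁻ ω, f t ω ∂P := by
  have hc : ∀ t, MeasurableSet {ω : ℕ → Bool | ω t = c} := fun t =>
    measurableSet_eq_fun (measurable_pi_apply t) measurable_const
  have hterm : ∀ t, ∫⁻ ω, (if ω t = c then f t ω else 0) ∂P = coinProb p c * ∫⁻ ω, f t ω ∂P := by
    intro t
    rw [← hP.setLIntegral_coord_eq_mul Finset.notMem_range_self c (Finset.coe_range t ▸ hf t),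
      ← lintegral_indicator (hc t)]
    simp only [indicator_apply, mem_ofPred_eq]
  rw [lintegral_tsum fun t => ((hf t).measurable (finite_Iio t)).ite (hc t) measurable_const
    |>.aemeasurable, ← ENNReal.tsum_mul_left]
  exact tsum_congr hterm

end IsBernoulliProduct

lemma lt_tau_iff (μ t : ℕ) (ω : ℕ → Bool) :
    (t : ℕ∞) < tau μ ω ↔ ∀ n ≤ t, countTrue ω n ≠ μ := by
  constructor
  · intro h n hn hc
    exact (h.trans_le (sInf_le ⟨n, rfl, hc⟩)).not_ge (by exact_mod_cast hn)
  · intro h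
    refine (ENat.add_one_le_iff (ENat.natCast_ne_top t)).mp (le_sInf ?_)
    rintro _ ⟨n, rfl, hn⟩
    exact_mod_cast (lt_of_not_ge fun hle => h n hle hn : t < n)

lemma dependsOn_countTrue (n : ℕ) : DependsOn (fun ω => countTrue ω n) (Iio n) := by
  intro ω ω' h
  exact congrArg Finset.card (Finset.filter_congr fun i hi => by rw [h i (Finset.mem_range.mp hi)])

lemma dependsOn_lt_tau (μ t : ℕ) : DependsOn (fun ω => (t : ℕ∞) < tau μ ω) (Iio t) := by
  intro ω ω' h
  simp only [lt_tau_iff]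
  refine propext (forall₂_congr fun n hn => ?_)
  rw [show countTrue ω n = countTrue ω' n from
    dependsOn_countTrue n fun i hi => h i (mem_Iio.2 ((mem_Iio.1 hi).trans_le hn))]

def stoppedWeight (μ : ℕ) (w : ℕ → (ℕ → Bool) → ℝ≥0∞) (t : ℕ) (ω : ℕ → Bool) : ℝ≥0∞ :=
  if (t : ℕ∞) < tau μ ω then w t ω else 0

lemma dependsOn_stoppedWeight {μ : ℕ} {w : ℕ → (ℕ → Bool) → ℝ≥0∞}
    (hw : ∀ t, DependsOn (w t) (Iio t)) (t : ℕ) : DependsOn (stoppedWeight μ w t) (Iio t) := by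
  intro ω ω' h
  simp only [stoppedWeight, dependsOn_lt_tau μ t h, hw t h]

lemma wOfM_eq_tsum (μ : ℕ) (w : ℕ → (ℕ → Bool) → ℝ≥0∞) (ω : ℕ → Bool) :
    wOfM μ w ω = ∑' t, if ω t = true then stoppedWeight μ w t ω else 0 :=
  tsum_congr fun t => by simp only [stoppedWeight, ← ite_and, and_comm]

lemma wOfN_eq_tsum (μ : ℕ) (w : ℕ → (ℕ → Bool) → ℝ≥0∞) (ω : ℕ → Bool) :
    wOfN μ w ω = ∑' t, if ω t = false then stoppedWeight μ w t ω else 0 :=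
  tsum_congr fun t => by simp only [stoppedWeight, ← ite_and, and_comm]

theorem expectation_wM_eq_ratio_mul_expectation_wN_general
    (p : ℝ) (hp1 : p < 1)
    (P : Measure (ℕ → Bool)) (hP : IsBernoulliProduct p P)
    (μ : ℕ)
    (w : ℕ → (ℕ → Bool) → ℝ≥0∞)
    (hdep : ∀ (t : ℕ) (ω ω' : ℕ → Bool), (∀ s < t, ω s = ω' s) → w t ω = w t ω') :
    ∫⁻ ω, wOfM μ w ω ∂P = ENNReal.ofReal (p / (1 - p)) * ∫⁻ ω, wOfN μ w ω ∂P := by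
  have hf := dependsOn_stoppedWeight (μ := μ) fun t ω ω' h => hdep t ω ω' h
  simp only [wOfM_eq_tsum, wOfN_eq_tsum]
  rw [hP.lintegral_tsum_ite_coord_eq_mul true hf, hP.lintegral_tsum_ite_coord_eq_mul false hf,
    ← mul_assoc]
  congr 1
  rw [coinProb, coinProb, if_pos rfl, if_neg Bool.false_ne_true, ← ofReal_mul' (sub_pos.2 hp1).le,
    div_mul_cancel₀ p (sub_pos.2 hp1).ne']

theorem expectation_wM_eq_ratio_mul_expectation_wN
    (p : ℝ) (hp0 : 0 < p) (hp1 : p < 1)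
    (P : Measure (ℕ → Bool)) [IsProbabilityMeasure P] (hP : IsBernoulliProduct p P)
    (μ : ℕ) (hμ : 1 ≤ μ)
    (w : ℕ → (ℕ → Bool) → ℝ≥0∞)
    (hmeas : ∀ t, Measurable (w t))
    (hdep : ∀ (t : ℕ) (ω ω' : ℕ → Bool), (∀ s < t, ω s = ω' s) → w t ω = w t ω') :
    ∫⁻ ω, wOfM μ w ω ∂P = ENNReal.ofReal (p / (1 - p)) * ∫⁻ ω, wOfN μ w ω ∂P :=
  expectation_wM_eq_ratio_mul_expectation_wN_general p hp1 P hP μ w hdep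

end
end

section
/- In the case μ = 1, if the weight system is decreasing and w(S)(ω) is defined as w(N)(ω) when h_N(ω) ≤ 1 and 0 otherwise, then E[w(N)] ≤ E[w(S)] + ((1−p²)/p²)·E[w(S)], where expectations are Lebesgue integrals with respect to ℙ and the real coefficient (1−p²)/p² is coerced to ℝ≥0∞ via ENNReal.ofReal. -/
open MeasureTheory ENNReal
open scoped Classical

noncomputable section

/-- `h_N(ω)`: the number of indices `t < τ(ω)` with `ω t = false` (as a value in `ℝ≥0∞`). -/
def hOfN (μ : ℕ) (ω : ℕ → Bool) : ℝ≥0∞ :=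
  ∑' t : ℕ, if (t : ℕ∞) < tau μ ω ∧ ω t = false then (1 : ℝ≥0∞) else 0

/-- `w(S)(ω) = w(N)(ω)` if `h_N(ω) ≤ μ`, and `0` otherwise. -/
def wOfS (μ : ℕ) (w : ℕ → (ℕ → Bool) → ℝ≥0∞) (ω : ℕ → Bool) : ℝ≥0∞ :=
  if hOfN μ ω ≤ (μ : ℝ≥0∞) then wOfN μ w ω else 0

/-!
Split the sample space according to the index `k` of the first `true`, an event of probability
`p (1 - p) ^ k`; these events cover almost everything. On the `k`-th one `τ = k + 1`, `h_N = k`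
and, since `w t` only sees the all-`false` prefix `0`, `w(N) = ∑_{t < k} w t 0`. Hence
`E[w(S)] = p (1 - p) · w 0 0`, while monotonicity gives
`E[w(N)] ≤ ∑ₖ p (1 - p) ^ k · k · w 0 0 = (1 - p) / p · w 0 0 = (1 + (1 - p²) / p²) · E[w(S)]`.
-/

def firstTrueAt (k : ℕ) : Set (ℕ → Bool) :=
  {ω | (∀ i < k, ω i = false) ∧ ω k = true}

section FirstTrue

variable {k : ℕ} {ω : ℕ → Bool}

lemma countTrue_eq_zero_of_mem_firstTrueAt (hω : ω ∈ firstTrueAt k) {n : ℕ} (hn : n ≤ k) :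
    countTrue ω n = 0 := by
  simp only [countTrue, Finset.card_eq_zero, Finset.filter_eq_empty_iff, Finset.mem_range]
  intro t ht
  simp [hω.1 t (ht.trans_le hn)]

lemma countTrue_succ_eq_one_of_mem_firstTrueAt (hω : ω ∈ firstTrueAt k) :
    countTrue ω (k + 1) = 1 := by
  rw [countTrue, Finset.range_add_one, Finset.filter_insert, if_pos hω.2,
    Finset.card_insert_of_notMem (by simp), ← countTrue,
    countTrue_eq_zero_of_mem_firstTrueAt hω le_rfl]

lemma tau_one_of_mem_firstTrueAt (hω : ω ∈ firstTrueAt k) : tau 1 ω = (k + 1 : ℕ) := by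
  refine le_antisymm (sInf_le ⟨k + 1, rfl, countTrue_succ_eq_one_of_mem_firstTrueAt hω⟩) ?_
  refine le_sInf ?_
  rintro _ ⟨n, rfl, hn⟩
  by_contra! hlt
  have hnk : n ≤ k := Nat.lt_succ_iff.mp (by exact_mod_cast hlt)
  simp [countTrue_eq_zero_of_mem_firstTrueAt hω hnk] at hn

lemma lt_tau_one_and_eq_false_iff (hω : ω ∈ firstTrueAt k) (t : ℕ) :
    ((t : ℕ∞) < tau 1 ω ∧ ω t = false) ↔ t < k := by
  rw [tau_one_of_mem_firstTrueAt hω, Nat.cast_lt]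
  refine ⟨fun ⟨ht, hf⟩ => lt_of_le_of_ne (Nat.lt_succ_iff.mp ht) ?_,
    fun ht => ⟨ht.trans (Nat.lt_succ_self k), hω.1 t ht⟩⟩
  rintro rfl
  simp [hω.2] at hf

lemma tsum_ite_lt_tau_one_of_mem_firstTrueAt (hω : ω ∈ firstTrueAt k) (f : ℕ → ℝ≥0∞) :
    ∑' t : ℕ, (if (t : ℕ∞) < tau 1 ω ∧ ω t = false then f t else 0) =
      ∑ t ∈ Finset.range k, f t := by
  simp_rw [lt_tau_one_and_eq_false_iff hω]
  rw [tsum_eq_sum (s := Finset.range k) (fun t ht => if_neg (by simpa using ht))]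
  exact Finset.sum_congr rfl fun t ht => if_pos (Finset.mem_range.mp ht)

lemma hOfN_one_of_mem_firstTrueAt (hω : ω ∈ firstTrueAt k) : hOfN 1 ω = k := by
  simp [hOfN, tsum_ite_lt_tau_one_of_mem_firstTrueAt hω]

lemma wOfN_one_of_mem_firstTrueAt {w : ℕ → (ℕ → Bool) → ℝ≥0∞}
    (hdep : ∀ (t : ℕ) (ω ω' : ℕ → Bool), (∀ s < t, ω s = ω' s) → w t ω = w t ω')
    (hω : ω ∈ firstTrueAt k) :
    wOfN 1 w ω = ∑ t ∈ Finset.range k, w t (fun _ => false) := by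
  rw [wOfN, tsum_ite_lt_tau_one_of_mem_firstTrueAt hω]
  exact Finset.sum_congr rfl fun t ht =>
    hdep t _ _ fun s hs => hω.1 s (hs.trans (Finset.mem_range.mp ht))

lemma measurableSet_firstTrueAt (k : ℕ) : MeasurableSet (firstTrueAt k) := by
  unfold firstTrueAt
  measurability

lemma pairwise_disjoint_firstTrueAt : Pairwise (Function.onFun Disjoint firstTrueAt) := by
  refine pairwise_disjoint_on firstTrueAt |>.mpr fun j k hjk => Set.disjoint_left.mpr ?_
  rintro ω ⟨-, hj⟩ ⟨hk, -⟩
  simp [hk j hjk] at hj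

lemma compl_iUnion_firstTrueAt : (⋃ k, firstTrueAt k)ᶜ = {ω | ∀ i, ω i = false} := by
  ext ω
  simp only [Set.mem_compl_iff, Set.mem_iUnion, not_exists, Set.mem_ofPred_eq]
  refine ⟨fun h i => ?_, fun h k hk => by simpa [h k] using hk.2⟩
  by_contra hi
  have hex : ∃ j, ω j = true := ⟨i, by simpa using hi⟩
  exact h (Nat.find hex) ⟨fun j hj => by simpa using Nat.find_min hex hj, Nat.find_spec hex⟩

end FirstTrue

namespace IsBernoulliProduct

variable {p : ℝ} {P : Measure (ℕ → Bool)}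

lemma measure_firstTrueAt (hP : IsBernoulliProduct p P) (k : ℕ) :
    P (firstTrueAt k) = ENNReal.ofReal p * ENNReal.ofReal (1 - p) ^ k := by
  have hcyl : firstTrueAt k = {ω | ∀ i ∈ Finset.range (k + 1), ω i = decide (i = k)} := by
    ext ω
    simp only [firstTrueAt, Finset.mem_range, Set.mem_ofPred_eq, Nat.lt_succ_iff_lt_or_eq,
      or_imp, forall_and, forall_eq]
    refine and_congr (forall₂_congr fun i hi => ?_) (by simp)
    simp [hi.ne]
  rw [hcyl, hP, Finset.prod_range_succ, Finset.prod_congr rfl fun i hi =>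
    by rw [decide_eq_false (Finset.mem_range.mp hi).ne, if_neg Bool.false_ne_true],
    Finset.prod_const, Finset.card_range, if_pos (decide_eq_true rfl), mul_comm]

lemma measure_forall_eq_false (hP : IsBernoulliProduct p P) (hp : 0 < p) :
    P {ω | ∀ i, ω i = false} = 0 := by
  have hbound (n : ℕ) : P {ω | ∀ i, ω i = false} ≤ ENNReal.ofReal (1 - p) ^ n :=
    calc P {ω | ∀ i, ω i = false}
        ≤ P {ω | ∀ i ∈ Finset.range n, ω i = false} := measure_mono fun ω hω i _ => hω i
      _ = ENNReal.ofReal (1 - p) ^ n := by rw [hP (Finset.range n) fun _ => false]; simp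
  exact le_antisymm (ge_of_tendsto' (ENNReal.tendsto_pow_atTop_nhds_zero_of_lt_one
    (ENNReal.ofReal_lt_one.mpr (by linarith))) hbound) zero_le

lemma lintegral_eq_tsum (hP : IsBernoulliProduct p P) (hp : 0 < p)
    {f : (ℕ → Bool) → ℝ≥0∞} {g : ℕ → ℝ≥0∞} (hfg : ∀ k, ∀ ω ∈ firstTrueAt k, f ω = g k) :
    ∫⁻ ω, f ω ∂P = ∑' k, ENNReal.ofReal p * ENNReal.ofReal (1 - p) ^ k * g k := by
  have hfull : (⋃ k, firstTrueAt k : Set (ℕ → Bool)) =ᵐ[P] Set.univ := by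
    rw [ae_eq_univ, compl_iUnion_firstTrueAt, hP.measure_forall_eq_false hp]
  rw [← setLIntegral_univ, ← setLIntegral_congr hfull,
    lintegral_iUnion measurableSet_firstTrueAt pairwise_disjoint_firstTrueAt]
  refine tsum_congr fun k => ?_
  rw [setLIntegral_congr_fun (measurableSet_firstTrueAt k) (hfg k), setLIntegral_const,
    hP.measure_firstTrueAt, mul_comm]

end IsBernoulliProduct

lemma ENNReal.tsum_natCast_mul_ofReal_pow {r : ℝ} (hr0 : 0 ≤ r) (hr1 : r < 1) :
    ∑' k : ℕ, (k : ℝ≥0∞) * ENNReal.ofReal r ^ k = ENNReal.ofReal (r / (1 - r) ^ 2) := by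
  have hnorm : ‖r‖ < 1 := by rwa [Real.norm_of_nonneg hr0]
  have hterm (k : ℕ) : (k : ℝ≥0∞) * ENNReal.ofReal r ^ k = ENNReal.ofReal (k * r ^ k) := by
    rw [ENNReal.ofReal_mul k.cast_nonneg, ENNReal.ofReal_pow hr0, ENNReal.ofReal_natCast]
  rw [tsum_congr hterm, ← ENNReal.ofReal_tsum_of_nonneg (fun k => by positivity)
    (by simpa using summable_pow_mul_geometric_of_norm_lt_one 1 hnorm),
    tsum_coe_mul_geometric_of_norm_lt_one hnorm]

namespace IsBernoulliProduct

variable {p : ℝ} {P : Measure (ℕ → Bool)} {w : ℕ → (ℕ → Bool) → ℝ≥0∞}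

lemma lintegral_wOfS_one (hP : IsBernoulliProduct p P) (hp : 0 < p)
    (hdep : ∀ (t : ℕ) (ω ω' : ℕ → Bool), (∀ s < t, ω s = ω' s) → w t ω = w t ω') :
    ∫⁻ ω, wOfS 1 w ω ∂P =
      ENNReal.ofReal p * ENNReal.ofReal (1 - p) * w 0 (fun _ => false) := by
  rw [hP.lintegral_eq_tsum hp (g := fun k => if k = 1 then w 0 (fun _ => false) else 0)]
  · simp_rw [mul_ite, mul_zero, tsum_ite_eq, pow_one]
  intro k ω hω
  rw [wOfS, hOfN_one_of_mem_firstTrueAt hω, wOfN_one_of_mem_firstTrueAt hdep hω]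
  rcases lt_trichotomy k 1 with hk | rfl | hk
  · simp [Nat.lt_one_iff.mp hk]
  · simp
  · simp [hk.ne', hk.not_ge]

lemma lintegral_wOfN_one_le (hP : IsBernoulliProduct p P) (hp0 : 0 < p) (hp1 : p < 1)
    (hdep : ∀ (t : ℕ) (ω ω' : ℕ → Bool), (∀ s < t, ω s = ω' s) → w t ω = w t ω')
    (hdec : ∀ t, w t (fun _ => false) ≤ w 0 (fun _ => false)) :
    ∫⁻ ω, wOfN 1 w ω ∂P ≤ ENNReal.ofReal ((1 - p) / p) * w 0 (fun _ => false) := by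
  rw [hP.lintegral_eq_tsum hp0 fun k ω hω => wOfN_one_of_mem_firstTrueAt hdep hω]
  calc ∑' k : ℕ, ENNReal.ofReal p * ENNReal.ofReal (1 - p) ^ k *
          ∑ t ∈ Finset.range k, w t (fun _ => false)
      ≤ ∑' k : ℕ, ENNReal.ofReal p * ENNReal.ofReal (1 - p) ^ k *
          (k * w 0 (fun _ => false)) := by
        gcongr with k
        simpa using Finset.sum_le_sum fun t (_ : t ∈ Finset.range k) => hdec t
    _ = ENNReal.ofReal p * (∑' k : ℕ, (k : ℝ≥0∞) * ENNReal.ofReal (1 - p) ^ k) *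
          w 0 (fun _ => false) := by
        rw [← ENNReal.tsum_mul_left, ← ENNReal.tsum_mul_right]
        exact tsum_congr fun k => by ring
    _ = ENNReal.ofReal ((1 - p) / p) * w 0 (fun _ => false) := by
        rw [ENNReal.tsum_natCast_mul_ofReal_pow (by linarith) (by linarith),
          ← ENNReal.ofReal_mul hp0.le, _root_.sub_sub_cancel]
        congr 2
        field_simp

end IsBernoulliProduct

theorem expectation_wN_le_expectation_wS_mu_one_general
    (p : ℝ) (hp0 : 0 < p) (hp1 : p < 1)
    (P : Measure (ℕ → Bool)) (hP : IsBernoulliProduct p P)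
    (μ : ℕ) (hμ : μ = 1)
    (w : ℕ → (ℕ → Bool) → ℝ≥0∞)
    (hdep : ∀ (t : ℕ) (ω ω' : ℕ → Bool), (∀ s < t, ω s = ω' s) → w t ω = w t ω')
    (hdec : ∀ (i j : ℕ) (ω : ℕ → Bool), i ≤ j → w j ω ≤ w i ω) :
    ∫⁻ ω, wOfN μ w ω ∂P ≤
      ∫⁻ ω, wOfS μ w ω ∂P +
        ENNReal.ofReal ((1 - p ^ 2) / p ^ 2) * ∫⁻ ω, wOfS μ w ω ∂P := by
  subst hμ
  have hcoef : ENNReal.ofReal ((1 - p) / p) =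
      (1 + ENNReal.ofReal ((1 - p ^ 2) / p ^ 2)) *
        (ENNReal.ofReal p * ENNReal.ofReal (1 - p)) := by
    have hnonneg : 0 ≤ (1 - p ^ 2) / p ^ 2 := div_nonneg (by nlinarith) (sq_nonneg p)
    rw [← ENNReal.ofReal_one, ← ENNReal.ofReal_add zero_le_one hnonneg,
      ← ENNReal.ofReal_mul hp0.le, ← ENNReal.ofReal_mul (by positivity)]
    congr 1
    field_simp
    ring
  rw [hP.lintegral_wOfS_one hp0 hdep]
  refine (hP.lintegral_wOfN_one_le hp0 hp1 hdep fun t => hdec 0 t _ t.zero_le).trans_eq ?_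
  rw [hcoef]
  ring

theorem expectation_wN_le_expectation_wS_mu_one
    (p : ℝ) (hp0 : 0 < p) (hp1 : p < 1)
    (P : Measure (ℕ → Bool)) [IsProbabilityMeasure P] (hP : IsBernoulliProduct p P)
    (μ : ℕ) (hμ : μ = 1)
    (w : ℕ → (ℕ → Bool) → ℝ≥0∞)
    (hmeas : ∀ t, Measurable (w t))
    (hdep : ∀ (t : ℕ) (ω ω' : ℕ → Bool), (∀ s < t, ω s = ω' s) → w t ω = w t ω')
    (hdec : ∀ (i j : ℕ) (ω : ℕ → Bool), i ≤ j → w j ω ≤ w i ω) :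
    ∫⁻ ω, wOfN μ w ω ∂P ≤
      ∫⁻ ω, wOfS μ w ω ∂P +
        ENNReal.ofReal ((1 - p ^ 2) / p ^ 2) * ∫⁻ ω, wOfS μ w ω ∂P :=
  expectation_wN_le_expectation_wS_mu_one_general p hp0 hp1 P hP μ hμ w hdep hdec

end
end

section
/- For all integers m ≥ 1 and n ≥ 1, the probability that the m-th head occurs after the n-th tail equals (1−p)^n · Σ_{i=0}^{m−1} C(n−1+i, i) · p^i. Precisely: ℙ{ω : i_false(n)(ω) < i_true(m)(ω)} = (1−p)^n · Σ_{i=0}^{m−1} (Nat.choose (n−1+i) i) · p^i, where the comparison is in ℕ∞. -/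
open MeasureTheory ENNReal
open scoped Classical

noncomputable section

/-- The number of indices `t < n` with `ω t = b`. -/
def countOf (b : Bool) (ω : ℕ → Bool) (n : ℕ) : ℕ :=
  ((Finset.range n).filter fun t => ω t = b).card

/-- `i_b(k)(ω)`: the least `T : ℕ` such that exactly `k` of `ω 0, …, ω (T-1)` equal `b`
(`∞` if no such `T` exists). -/
def idx (b : Bool) (k : ℕ) (ω : ℕ → Bool) : ℕ∞ :=
  sInf {T : ℕ∞ | ∃ n : ℕ, T = (n : ℕ∞) ∧ countOf b ω n = k}

/-!
The `n`-th tail comes before the `m`-th head exactly when fewer than `m` of the first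
`n + m - 1` flips are heads, so the probability is the binomial tail
`∑_{k<m} C(n+m-1, k) p^k (1-p)^(n+m-1-k)`. By Pascal's rule, passing from `m` to `m + 1`
adds to this tail exactly the next term `C(n-1+m, m) p^m (1-p)^n` of the negative-binomial sum
`(1-p)^n ∑_{i<m} C(n-1+i, i) p^i`, so induction on `m` identifies the two.
-/

open Finset

section Counting

variable (b : Bool) (ω : ℕ → Bool)

lemma countOf_mono {s t : ℕ} (h : s ≤ t) : countOf b ω s ≤ countOf b ω t :=
  card_le_card (filter_subset_filter _ (range_subset_range.2 h))

lemma countOf_succ (t : ℕ) :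
    countOf b ω (t + 1) = countOf b ω t + if ω t = b then 1 else 0 := by
  simp only [countOf, range_add_one, filter_insert]
  split_ifs with h
  · exact card_insert_of_notMem (by simp)
  · rfl

lemma countOf_true_add_countOf_false (t : ℕ) :
    countOf true ω t + countOf false ω t = t := by
  induction t with
  | zero => simp [countOf]
  | succ t ih =>
    rw [countOf_succ, countOf_succ]
    cases ω t <;>
      simp only [Bool.false_eq_true, Bool.true_eq_false, ↓reduceIte, add_zero] <;> omega

variable {b ω}

lemma exists_le_countOf_eq {k T : ℕ} (h : k ≤ countOf b ω T) :
    ∃ t ≤ T, countOf b ω t = k := by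
  induction T with
  | zero => exact ⟨0, le_rfl, by simp_all [countOf]⟩
  | succ T ih =>
    by_cases hT : k ≤ countOf b ω T
    · obtain ⟨t, ht, hk⟩ := ih hT
      exact ⟨t, ht.trans T.le_succ, hk⟩
    · refine ⟨T + 1, le_rfl, ?_⟩
      rw [countOf_succ] at h ⊢
      split_ifs at h ⊢ <;> omega

lemma idx_le_iff {k : ℕ} (T : ℕ) : idx b k ω ≤ T ↔ k ≤ countOf b ω T := by
  constructor
  · intro h
    by_contra! hT
    have hlt : (T : ℕ∞) < idx b k ω := by
      refine (ENat.add_one_le_iff (ENat.natCast_ne_top T)).1 (le_sInf ?_)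
      rintro _ ⟨t, rfl, ht⟩
      have : T < t := by
        by_contra! htT
        exact absurd (countOf_mono b ω htT) (by omega)
      exact_mod_cast this
    exact h.not_gt hlt
  · intro h
    obtain ⟨t, ht, hk⟩ := exists_le_countOf_eq h
    exact (sInf_le ⟨t, rfl, hk⟩ : idx b k ω ≤ t).trans (by exact_mod_cast ht)

lemma idx_false_lt_idx_true_iff (a m : ℕ) :
    idx false (a + 1) ω < idx true m ω ↔ countOf true ω (a + m) < m := by
  have hsum := countOf_true_add_countOf_false ω
  constructor
  · intro h
    by_contra! hm
    have htrue := (idx_le_iff (a + m)).2 hm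
    have hfalse := (idx_le_iff (a + m)).1 (h.le.trans htrue)
    have := hsum (a + m)
    omega
  · intro h
    obtain ⟨t, ht, hk⟩ := exists_le_countOf_eq
      (show a + 1 ≤ countOf false ω (a + m) by have := hsum (a + m); omega)
    have hfalse := (idx_le_iff t).2 hk.ge
    have htrue : ¬ idx true m ω ≤ t := by
      rw [idx_le_iff]
      have := hsum t
      omega
    exact hfalse.trans_lt (not_le.1 htrue)

end Counting

lemma mem_cylinder_iff_filter_eq {t s : Finset ℕ} (hst : s ⊆ t) (ω : ℕ → Bool) :
    (∀ i ∈ t, ω i = decide (i ∈ s)) ↔ t.filter (fun i => ω i = true) = s := by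
  constructor
  · intro h
    ext i
    simp only [mem_filter]
    constructor
    · rintro ⟨hi, hω⟩
      simpa [hω] using h i hi
    · intro hi
      exact ⟨hst hi, by simpa [hi] using h i (hst hi)⟩
  · rintro rfl i hi
    simp [hi]

lemma setOf_countOf_true_eq (N k : ℕ) :
    {ω : ℕ → Bool | countOf true ω N = k} =
      ⋃ s ∈ (range N).powersetCard k, {ω | ∀ i ∈ range N, ω i = decide (i ∈ s)} := by
  ext ω
  simp only [Set.mem_ofPred_eq, Set.mem_iUnion, mem_powersetCard, exists_prop]
  constructor
  · rintro rfl
    exact ⟨_, ⟨filter_subset _ _, rfl⟩,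
      (mem_cylinder_iff_filter_eq (filter_subset _ _) ω).2 rfl⟩
  · rintro ⟨s, ⟨hs, rfl⟩, hω⟩
    rw [countOf, (mem_cylinder_iff_filter_eq hs ω).1 hω]

lemma measurableSet_cylinder (t : Finset ℕ) (b : ℕ → Bool) :
    MeasurableSet {ω : ℕ → Bool | ∀ i ∈ t, ω i = b i} :=
  MeasurableSet.pi t.countable_toSet fun i _ => measurableSet_singleton (b i)

lemma measurableSet_countOf_true_eq (N k : ℕ) :
    MeasurableSet {ω : ℕ → Bool | countOf true ω N = k} := by
  rw [setOf_countOf_true_eq]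
  exact .biUnion (countable_toSet _) fun s _ => measurableSet_cylinder _ _

namespace IsBernoulliProduct

variable {p : ℝ} {P : Measure (ℕ → Bool)}

lemma measure_cylinder (hP : IsBernoulliProduct p P) {t s : Finset ℕ} (hst : s ⊆ t) :
    P {ω | ∀ i ∈ t, ω i = decide (i ∈ s)} =
      ENNReal.ofReal p ^ s.card * ENNReal.ofReal (1 - p) ^ (t.card - s.card) := by
  rw [hP]
  simp only [decide_eq_true_eq]
  rw [prod_ite, prod_const, prod_const, filter_mem_eq_inter, inter_eq_right.2 hst,
    filter_not, filter_mem_eq_inter, inter_eq_right.2 hst, card_sdiff_of_subset hst]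

lemma measure_countOf_true_eq (hP : IsBernoulliProduct p P) (N k : ℕ) :
    P {ω | countOf true ω N = k} =
      N.choose k * ENNReal.ofReal p ^ k * ENNReal.ofReal (1 - p) ^ (N - k) := by
  have hdisj : ((range N).powersetCard k : Set (Finset ℕ)).PairwiseDisjoint
      fun s => {ω : ℕ → Bool | ∀ i ∈ range N, ω i = decide (i ∈ s)} := by
    intro s hs s' hs' hne
    refine Set.disjoint_left.2 fun ω hω hω' => hne ?_
    rw [← (mem_cylinder_iff_filter_eq (mem_powersetCard.1 hs).1 ω).1 hω,
      ← (mem_cylinder_iff_filter_eq (mem_powersetCard.1 hs').1 ω).1 hω']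
  rw [setOf_countOf_true_eq, measure_biUnion_finset hdisj fun s _ => measurableSet_cylinder _ _,
    sum_congr rfl fun s hs => by
      rw [hP.measure_cylinder (mem_powersetCard.1 hs).1, (mem_powersetCard.1 hs).2, card_range],
    sum_const, card_powersetCard, card_range, nsmul_eq_mul, mul_assoc]

lemma measure_countOf_true_lt (hP : IsBernoulliProduct p P) (N m : ℕ) :
    P {ω | countOf true ω N < m} =
      ∑ k ∈ range m, N.choose k * ENNReal.ofReal p ^ k * ENNReal.ofReal (1 - p) ^ (N - k) := by
  have hunion : {ω : ℕ → Bool | countOf true ω N < m} =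
      ⋃ k ∈ range m, (fun ω => countOf true ω N) ⁻¹' {k} := by
    ext ω
    simp
  rw [hunion, measure_biUnion_finset (Set.pairwiseDisjoint_fiber _ _)
    fun k _ => measurableSet_countOf_true_eq N k]
  exact sum_congr rfl fun k _ => hP.measure_countOf_true_eq N k

end IsBernoulliProduct

section Binomial

variable {R : Type*} [CommRing R] {p q : R}

lemma sum_range_succ_choose_mul_pow_mul_pow (h : p + q = 1) (a m : ℕ) :
    ∑ k ∈ range (m + 1), ((a + m + 1).choose k : R) * p ^ k * q ^ (a + m + 1 - k) =
      ∑ k ∈ range m, ((a + m).choose k : R) * p ^ k * q ^ (a + m - k) +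
        ((a + m).choose m : R) * p ^ m * q ^ (a + 1) := by
  set f : ℕ → R := fun k => ((a + m).choose k : R) * p ^ k * q ^ (a + m - k) with hf
  have hpascal : ∀ k ∈ range m, ((a + m + 1).choose (k + 1) : R) * p ^ (k + 1) *
      q ^ (a + m + 1 - (k + 1)) = p * f k + q * f (k + 1) := by
    intro k hk
    have hkm := mem_range.1 hk
    simp only [hf]
    rw [Nat.choose_succ_succ, show a + m + 1 - (k + 1) = a + m - (k + 1) + 1 by omega,
      show a + m - k = a + m - (k + 1) + 1 by omega]
    push_cast
    ring
  have hshift : ∑ k ∈ range m, f (k + 1) = ∑ k ∈ range m, f k + f m - q ^ (a + m) := by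
    rw [← sum_range_succ, sum_range_succ']
    simp [hf]
  rw [sum_range_succ', sum_congr rfl hpascal, sum_add_distrib, ← mul_sum, ← mul_sum, hshift]
  simp only [hf, Nat.choose_zero_right, Nat.cast_one, pow_zero, one_mul, Nat.sub_zero,
    show a + m - m = a by omega]
  linear_combination (∑ k ∈ range m, f k) * h

lemma sum_range_choose_mul_pow_mul_pow (h : p + q = 1) (a m : ℕ) :
    ∑ k ∈ range m, ((a + m).choose k : R) * p ^ k * q ^ (a + m - k) =
      q ^ (a + 1) * ∑ i ∈ range m, ((a + i).choose i : R) * p ^ i := by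
  induction m with
  | zero => simp
  | succ m ih =>
    rw [← add_assoc, sum_range_succ_choose_mul_pow_mul_pow h, ih, sum_range_succ]
    ring

end Binomial

theorem prob_mth_head_after_nth_tail_general
    (p : ℝ) (hp0 : 0 < p) (hp1 : p < 1)
    (P : Measure (ℕ → Bool)) (hP : IsBernoulliProduct p P)
    (m n : ℕ) (hn : 1 ≤ n) :
    P {ω | idx false n ω < idx true m ω} =
      ENNReal.ofReal
        ((1 - p) ^ n * ∑ i ∈ Finset.range m, (Nat.choose (n - 1 + i) i : ℝ) * p ^ i) := by
  obtain ⟨a, rfl⟩ : ∃ a, n = a + 1 := ⟨n - 1, by omega⟩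
  have hq : 0 ≤ 1 - p := by linarith
  have hevent : {ω | idx false (a + 1) ω < idx true m ω} = {ω | countOf true ω (a + m) < m} :=
    Set.ext fun ω => idx_false_lt_idx_true_iff a m
  rw [hevent, hP.measure_countOf_true_lt, Nat.add_sub_cancel,
    ← sum_range_choose_mul_pow_mul_pow (add_sub_cancel p 1),
    ofReal_sum_of_nonneg fun k _ => by positivity]
  refine sum_congr rfl fun k _ => ?_
  rw [ofReal_mul (by positivity), ofReal_mul (by positivity), ofReal_natCast,
    ofReal_pow hp0.le, ofReal_pow hq]

/-- `G_p(m,n) = (1-p)^n Σ_{i=0}^{m-1} C(n-1+i, i) p^i`. -/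
theorem prob_mth_head_after_nth_tail
    (p : ℝ) (hp0 : 0 < p) (hp1 : p < 1)
    (P : Measure (ℕ → Bool)) [IsProbabilityMeasure P] (hP : IsBernoulliProduct p P)
    (m n : ℕ) (hm : 1 ≤ m) (hn : 1 ≤ n) :
    P {ω | idx false n ω < idx true m ω} =
      ENNReal.ofReal
        ((1 - p) ^ n * ∑ i ∈ Finset.range m, (Nat.choose (n - 1 + i) i : ℝ) * p ^ i) :=
  prob_mth_head_after_nth_tail_general p hp0 hp1 P hP m n hn

end
end
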